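/- arXiv:2212.06256 — 3 statements merged into one kernel-verified Lean document; each statement's English description precedes it below -/
import Mathlib

section
/- Let F be a field of characteristic p ≥ 0, let V be a nonzero FS_n-module, and set r := 𝔯(V). If p ≠ 2 then dim V ≥ C(⌊n/2⌋, r), and if p = 2 then dim V ≥ 2^r · C(⌊n/3⌋, r), where C(a,b) denotes the binomial coefficient. -/
/-!
Formalization of statements from "Level, rank, and tensor growth of representations of
symmetric groups" by Kleshchev, Larsen, Tiep.
-/

namespace KLT

open scoped Classical TensorProduct

/-- The row lengths of a partition, `0`-indexed: `rowLen lam 0` is the largest part `λ₁`. -/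
def rowLen {n : ℕ} (lam : n.Partition) (i : ℕ) : ℕ :=
  ((lam.parts.sort (· ≤ ·)).reverse).getD i 0

/-- The level `𝔩(λ) = n - λ₁` of a partition `λ` of `n`. -/
def level {n : ℕ} (lam : n.Partition) : ℕ := n - rowLen lam 0

/-- The level `𝔩(λ') = n - λ'₁` of the conjugate partition `λ'` of `λ`
(`λ'₁` is the number of parts of `λ`). -/
def conjLevel {n : ℕ} (lam : n.Partition) : ℕ := n - Multiset.card lam.parts

/-- A partition is `p`-regular if (when `p > 0`) no part is repeated `p` or more times.
For `p = 0` every partition is `p`-regular. -/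
def PRegular {n : ℕ} (p : ℕ) (lam : n.Partition) : Prop :=
  0 < p → ∀ a : ℕ, lam.parts.count a < p

/-- The set of cells (boxes) of the Young diagram of `lam`, `0`-indexed:
`(i, j)` with `j < λ_{i+1}`. -/
def Cells {n : ℕ} (lam : n.Partition) : Set (ℕ × ℕ) := {c | c.2 < rowLen lam c.1}

/-- A bijective filling of the Young diagram of `lam` by `{1, …, n}` (modelled on `Fin n`):
`T x` is the cell occupied by `x`. -/
def IsTableau {n : ℕ} (lam : n.Partition) (T : Fin n → ℕ × ℕ) : Prop :=
  Function.Injective T ∧ Set.range T = Cells lam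

/-- `λ̄`: the partition of `𝔩(λ)` obtained by deleting the first row of `λ`. -/
def barPartition {n : ℕ} (lam : n.Partition) : (level lam).Partition where
  parts := (((lam.parts.sort (· ≤ ·)).reverse).tail : Multiset ℕ)
  parts_pos := by
    intro a ha
    apply lam.parts_pos (i := a)
    have h1 : a ∈ ((lam.parts.sort (· ≤ ·)).reverse).tail := by exact_mod_cast ha
    have h2 : a ∈ (lam.parts.sort (· ≤ ·)).reverse := List.mem_of_mem_tail h1
    rw [List.mem_reverse] at h2
    exact (Multiset.mem_sort _).mp h2
  parts_sum := by
    have hsum : ((lam.parts.sort (· ≤ ·)).reverse).sum = n := by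
      rw [List.sum_reverse]
      have h : ((lam.parts.sort (· ≤ ·) : List ℕ) : Multiset ℕ) = lam.parts :=
        Multiset.sort_eq _ _
      calc (lam.parts.sort (· ≤ ·)).sum
          = ((lam.parts.sort (· ≤ ·) : List ℕ) : Multiset ℕ).sum := (Multiset.sum_coe _).symm
        _ = lam.parts.sum := by rw [h]
        _ = n := lam.parts_sum
    show ((((lam.parts.sort (· ≤ ·)).reverse).tail : List ℕ) : Multiset ℕ).sum = level lam
    rcases h : (lam.parts.sort (· ≤ ·)).reverse with _ | ⟨a, t⟩
    · rw [h] at hsum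
      have hn : n = 0 := by simpa using hsum.symm
      simp [level, rowLen, h, hn]
    · rw [h] at hsum
      simp only [List.sum_cons] at hsum
      have ha : rowLen lam 0 = a := by simp [rowLen, h]
      simp only [h, level, ha, List.tail_cons, Multiset.sum_coe]
      omega

/-- The group algebra `F𝔖ₙ` of the symmetric group on `n` letters over the field `F`.
An `F𝔖ₙ`-module is a module over this algebra. -/
abbrev GA (F : Type) [Field F] (n : ℕ) : Type := MonoidAlgebra F (Equiv.Perm (Fin n))

/-- The element of the group algebra corresponding to a permutation. -/
noncomputable def ga (F : Type) [Field F] {n : ℕ} (σ : Equiv.Perm (Fin n)) : GA F n :=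
  MonoidAlgebra.of F (Equiv.Perm (Fin n)) σ

/-- There are `r` transpositions `(aₛ, bₛ)` with all `2r` entries distinct, and a
simultaneous `(-1)`-eigenvector `v ≠ 0` in `V` for all of them. -/
def HasNegSystem (F : Type) [Field F] (n : ℕ) (V : Type*) [AddCommGroup V]
    [Module (GA F n) V] (r : ℕ) : Prop :=
  ∃ (a b : Fin r → Fin n) (v : V),
    Function.Injective (fun x : Fin r × Bool => if x.2 then a x.1 else b x.1) ∧
    v ≠ 0 ∧ ∀ s : Fin r, ga F (Equiv.swap (a s) (b s)) • v = -v

/-- There are `r` transpositions `(aₛ, bₛ)` with all `2r` entries distinct, and a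
simultaneous `(+1)`-eigenvector `v ≠ 0` in `V` for all of them; this computes the
`2`-rank of the sign-twist `V ⊗ sign`. -/
def HasPosSystem (F : Type) [Field F] (n : ℕ) (V : Type*) [AddCommGroup V]
    [Module (GA F n) V] (r : ℕ) : Prop :=
  ∃ (a b : Fin r → Fin n) (v : V),
    Function.Injective (fun x : Fin r × Bool => if x.2 then a x.1 else b x.1) ∧
    v ≠ 0 ∧ ∀ s : Fin r, ga F (Equiv.swap (a s) (b s)) • v = v

/-- The `2`-rank `𝔯₂(V)` of an `F𝔖ₙ`-module `V` (`char F ≠ 2`): the largest `r` such that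
there exist `r` disjoint transpositions admitting a simultaneous `(-1)`-eigenvector in
`V`. -/
noncomputable def rank2 (F : Type) [Field F] (n : ℕ) (V : Type*) [AddCommGroup V]
    [Module (GA F n) V] : ℕ :=
  sSup {r : ℕ | HasNegSystem F n V r}

/-- The `2`-rank `𝔯₂(V ⊗ sign)` of the sign-twist of `V`: the largest `r` such that
there exist `r` disjoint transpositions admitting a simultaneous `(+1)`-eigenvector in
`V`. -/
noncomputable def rank2sign (F : Type) [Field F] (n : ℕ) (V : Type*) [AddCommGroup V]
    [Module (GA F n) V] : ℕ :=
  sSup {r : ℕ | HasPosSystem F n V r}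

/-- The 3-cycle `(i, j, k)`. -/
def cyc3 {n : ℕ} (i j k : Fin n) : Equiv.Perm (Fin n) := Equiv.swap i j * Equiv.swap j k

/-- There are `r` 3-cycles `(aₛ, bₛ, cₛ)` with all `3r` entries distinct, and a
simultaneous `ζ`-eigenvector `v ≠ 0` in `V` for all of them. -/
def HasZetaSystem (F : Type) [Field F] (n : ℕ) (V : Type*) [AddCommGroup V]
    [Module (GA F n) V] (zeta : F) (r : ℕ) : Prop :=
  ∃ (a b c : Fin r → Fin n) (v : V),
    Function.Injective (fun x : Fin r × Fin 3 =>
      if x.2 = (0 : Fin 3) then a x.1 else if x.2 = (1 : Fin 3) then b x.1 else c x.1) ∧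
    v ≠ 0 ∧ ∀ s : Fin r,
      ga F (cyc3 (a s) (b s) (c s)) • v = algebraMap F (GA F n) zeta • v

/-- The `3`-rank `𝔯₃(V)` of an `F𝔖ₙ`-module `V` (with respect to a primitive cube root
of unity `zeta ∈ F`): the largest `r` such that there exist `r` disjoint 3-cycles
admitting a simultaneous `ζ`-eigenvector in `V`. -/
noncomputable def rank3 (F : Type) [Field F] (n : ℕ) (zeta : F) (V : Type*) [AddCommGroup V]
    [Module (GA F n) V] : ℕ :=
  sSup {r : ℕ | HasZetaSystem F n V zeta r}

/-- The rank `𝔯(D) = min(𝔯₂(D), 𝔯₂(D ⊗ sign))` of an (irreducible) module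
(case `char F ≠ 2`). -/
noncomputable def irrRank2 (F : Type) [Field F] (n : ℕ) (V : Type*) [AddCommGroup V]
    [Module (GA F n) V] : ℕ :=
  min (rank2 F n V) (rank2sign F n V)

/-- The rank `𝔯(V)` of an `F𝔖ₙ`-module `V` for `char F ≠ 2`: the maximum of
`𝔯(D) = min(𝔯₂(D), 𝔯₂(D ⊗ sign))` over the composition factors `D` of `V`
(realized as subquotients of `V`). -/
noncomputable def modRank2 (F : Type) [Field F] (n : ℕ) (V : Type*) [AddCommGroup V]
    [Module (GA F n) V] : ℕ :=
  sSup {r : ℕ | ∃ A B : Submodule (GA F n) V, A ≤ B ∧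
    IsSimpleModule (GA F n) (↥B ⧸ (A.comap B.subtype)) ∧
    r = irrRank2 F n (↥B ⧸ (A.comap B.subtype))}

/-- The rank `𝔯(V)` of an `F𝔖ₙ`-module `V` for `char F = 2`: the maximum of
`𝔯(D) = 𝔯₃(D)` over the composition factors `D` of `V` (realized as subquotients
of `V`); `zeta` is a primitive cube root of unity in `F`. -/
noncomputable def modRank3 (F : Type) [Field F] (n : ℕ) (zeta : F) (V : Type*)
    [AddCommGroup V] [Module (GA F n) V] : ℕ :=
  sSup {r : ℕ | ∃ A B : Submodule (GA F n) V, A ≤ B ∧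
    IsSimpleModule (GA F n) (↥B ⧸ (A.comap B.subtype)) ∧
    r = rank3 F n zeta (↥B ⧸ (A.comap B.subtype))}

/-!
Cut `Fin n` into `m = ⌊n/q⌋` blocks of size `q` (`q = 2` if `p ≠ 2`, `q = 3` if `p = 2`), with
standard `q`-cycles `c₁, …, c_m`. These commute, `cᵢ ^ q = 1`, and `F` contains the `q`-th roots
of unity, so a common eigenvector of some of the `cᵢ` extends to one of all of them. Work in a
composition factor `D` realizing `𝔯(V)` and let `r` be the largest size of a system of disjoint
`q`-cycles with a common eigenvector of eigenvalue `μ`. Systems of equal size are conjugate, so a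
maximal one can be moved onto any `r` blocks and extended to all `cᵢ`; by maximality the
eigenvalue is `μ` on exactly these blocks. For `q = 3`, reversing cycles turns `ζ` into `ζ²`.
This yields `C(m, r)`, resp. `2 ^ r · C(m, r)`, joint eigenvectors with distinct characters,
which are linearly independent. For `p ≠ 2`, `𝔯(D)` is `𝔯₂(D)` (`μ = -1`) or `𝔯₂(D ⊗ sign)`
(`μ = 1`).
-/

open Function Polynomial

section JointEigenvectors

variable {F M : Type*} [Field F] [AddCommGroup M] [Module F M]

theorem exists_hasEigenvalue_of_aeval_prod_eq_zero [Nontrivial M] (T : Module.End F M)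
    (s : Multiset F) (hT : aeval T (s.map fun a => X - C a).prod = 0) :
    ∃ a ∈ s, T.HasEigenvalue a := by
  obtain ⟨w, hw⟩ := exists_ne (0 : M)
  suffices key : ∀ (s : Multiset F) (w : M), w ≠ 0 →
      aeval T (s.map fun a => X - C a).prod w = 0 → ∃ a ∈ s, T.HasEigenvalue a from
    key s w hw (by rw [hT, LinearMap.zero_apply])
  intro s
  induction s using Multiset.induction_on with
  | empty => intro w hw h; simp_all
  | cons a t ih =>
    intro w hw h
    set u := aeval T (t.map fun a => X - C a).prod w
    by_cases hu : u = 0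
    · obtain ⟨b, hb, hTb⟩ := ih w hw hu
      exact ⟨b, Multiset.mem_cons_of_mem hb, hTb⟩
    · refine ⟨a, Multiset.mem_cons_self a t, Module.End.hasEigenvalue_of_hasEigenvector
        ⟨Module.End.mem_eigenspace_iff.mpr ?_, hu⟩⟩
      simp only [Multiset.map_cons, Multiset.prod_cons, map_mul, Module.End.mul_apply, map_sub,
        aeval_X, aeval_C, LinearMap.sub_apply, Module.algebraMap_end_apply] at h
      exact sub_eq_zero.mp h

theorem exists_hasEigenvalue_of_pow_eq_one [Nontrivial M] {ζ : F} {q : ℕ}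
    (hζ : IsPrimitiveRoot ζ q) (hq : 0 < q) (T : Module.End F M) (hT : T ^ q = 1) :
    ∃ a, a ^ q = 1 ∧ T.HasEigenvalue a := by
  obtain ⟨a, ha, hTa⟩ := exists_hasEigenvalue_of_aeval_prod_eq_zero T (nthRootsFinset q (1 : F)).val
    (by rw [← Finset.prod_eq_multiset_prod, ← X_pow_sub_one_eq_prod hq hζ]; simp [hT])
  exact ⟨a, (mem_nthRootsFinset hq 1).mp ha, hTa⟩

theorem pow_eq_one_of_apply_eq_smul {T : Module.End F M} {q : ℕ} (hT : T ^ q = 1) {a : F}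
    {w : M} (hw : w ≠ 0) (h : T w = a • w) : a ^ q = 1 := by
  have := Module.End.HasEigenvector.pow_apply ⟨Module.End.mem_eigenspace_iff.mpr h, hw⟩ q
  rw [hT, Module.End.one_apply] at this
  exact smul_left_injective F hw (by simpa using this.symm)

variable {ι : Type*} {T : ι → Module.End F M}

theorem exists_jointEigenvector_extending [Fintype ι] (hcomm : ∀ i j, Commute (T i) (T j))
    {ζ : F} {q : ℕ} (hζ : IsPrimitiveRoot ζ q) (hq : 0 < q) (hT : ∀ i, T i ^ q = 1)
    (S : Finset ι) (χ : ι → F) {w : M} (hw : w ≠ 0) (hwS : ∀ i ∈ S, T i w = χ i • w) :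
    ∃ χ' : ι → F, (∀ i ∈ S, χ' i = χ i) ∧ ∃ w' : M, w' ≠ 0 ∧ ∀ i, T i w' = χ' i • w' := by
  classical
  suffices key : ∀ s : Finset ι, ∃ χ' : ι → F, (∀ i ∈ S, χ' i = χ i) ∧
      ∃ w' : M, w' ≠ 0 ∧ ∀ i ∈ S ∪ s, T i w' = χ' i • w' by
    obtain ⟨χ', hχ', w', hw', h⟩ := key Finset.univ
    exact ⟨χ', hχ', w', hw', fun i => h i (by simp)⟩
  intro s
  induction s using Finset.induction_on with
  | empty => exact ⟨χ, fun _ _ => rfl, w, hw, by simpa using hwS⟩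
  | insert j s _ ih =>
    obtain ⟨χ', hχ', w', hw', h⟩ := ih
    by_cases hj : j ∈ S ∪ s
    · exact ⟨χ', hχ', w', hw', by simpa [Finset.union_insert, Finset.insert_eq_of_mem hj] using h⟩
    let W : Submodule F M := ⨅ i ∈ S ∪ s, (T i).eigenspace (χ' i)
    have hW : ∀ x ∈ W, T j x ∈ W := by
      intro x hx
      simp only [W, Submodule.mem_iInf, Module.End.mem_eigenspace_iff] at hx ⊢
      intro i hi
      rw [← Module.End.mul_apply, (hcomm i j).eq, Module.End.mul_apply, hx i hi, map_smul]
    have : Nontrivial W := ⟨⟨⟨w', by simpa [W] using h⟩, 0, by simpa using hw'⟩⟩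
    obtain ⟨a, -, ha⟩ := exists_hasEigenvalue_of_pow_eq_one hζ hq ((T j).restrict hW)
      (by ext x; simp [Module.End.pow_restrict, hT])
    obtain ⟨u, hu⟩ := ha.exists_hasEigenvector
    refine ⟨update χ' j a, fun i hi => ?_, u, fun h0 => hu.2 (Subtype.ext h0), fun i hi => ?_⟩
    · rw [update_of_ne (by rintro rfl; exact hj (Finset.mem_union_left s hi))]
      exact hχ' i hi
    · rcases eq_or_ne i j with rfl | hij
      · simpa using congrArg Subtype.val (Module.End.mem_eigenspace_iff.mp hu.1)
      · have hi' : i ∈ S ∪ s := by simpa [hij] using hi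
        have := u.2
        simp only [W, Submodule.mem_iInf, Module.End.mem_eigenspace_iff] at this
        rw [update_of_ne hij]
        exact this i hi'

theorem card_le_finrank_of_jointEigenvectors [FiniteDimensional F M]
    (hcomm : ∀ i j, Commute (T i) (T j)) {κ : Type*} [Fintype κ] {χ : κ → ι → F}
    (hχ : Injective χ) (h : ∀ a, ∃ v : M, v ≠ 0 ∧ ∀ i, T i v = χ a i • v) :
    Fintype.card κ ≤ Module.finrank F M := by
  choose v hv hTv using h
  have hind := (Module.End.independent_iInf_maxGenEigenspace_of_forall_mapsTo T fun i j φ =>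
    Module.End.mapsTo_maxGenEigenspace_of_comm (hcomm j i) φ).comp hχ
  refine (hind.linearIndependent _ (fun a => Submodule.mem_iInf _ |>.mpr fun i => ?_)
    hv).fintype_card_le_finrank
  exact Module.End.eigenspace_le_maxGenEigenspace (Module.End.mem_eigenspace_iff.mpr (hTv a i))

end JointEigenvectors

theorem exists_perm_comp_eq {α β : Type*} [Finite α] [Finite β] {f g : α → β}
    (hf : Injective f) (hg : Injective g) : ∃ σ : Equiv.Perm β, σ ∘ f = g := by
  classical
  have := Fintype.ofFinite α
  let e : Set.range f ≃ Set.range g := (Equiv.ofInjective f hf).symm.trans (Equiv.ofInjective g hg)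
  refine ⟨e.extendSubtype, funext fun a => ?_⟩
  simp [Equiv.extendSubtype_apply_of_mem e (f a) ⟨a, rfl⟩, e, Equiv.ofInjective_symm_apply]

theorem sSup_setOf_spec {P : ℕ → Prop} {N : ℕ} (h0 : P 0) (hN : ∀ r, P r → r ≤ N) :
    P (sSup {r | P r}) ∧ ¬P (sSup {r | P r} + 1) := by
  have hbdd : BddAbove {r | P r} := ⟨N, hN⟩
  exact ⟨Nat.sSup_mem ⟨0, h0⟩ hbdd, fun h => (le_csSup hbdd h).not_gt (Nat.lt_succ_self _)⟩

noncomputable def permRep (F : Type) [Field F] {n : ℕ} (M : Type*) [AddCommGroup M]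
    [Module F M] [Module (GA F n) M] [IsScalarTower F (GA F n) M] :
    Representation F (Equiv.Perm (Fin n)) M :=
  (Algebra.lsmul F F M).toMonoidHom.comp (MonoidAlgebra.of F _)

section Conj

variable {F G M : Type*} [Field F] [Group G] [AddCommGroup M] [Module F M]
  (ρ : Representation F G M)

theorem Representation.apply_ne_zero (σ : G) {v : M} (hv : v ≠ 0) : ρ σ v ≠ 0 := fun h =>
  hv (by simpa [← Module.End.mul_apply, ← map_mul] using congrArg (ρ σ⁻¹) h)

theorem Representation.conj_apply_eq_smul {τ : G} {c : F} {v : M} (h : ρ τ v = c • v) (σ : G) :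
    ρ (σ * τ * σ⁻¹) (ρ σ v) = c • ρ σ v := by
  simp only [map_mul, Module.End.mul_apply]
  rw [← Module.End.mul_apply (ρ σ⁻¹), ← map_mul, inv_mul_cancel, map_one, Module.End.one_apply, h,
    map_smul]

end Conj

/-- `blockPt q (i, j) = q * i + j`; the last `n % q` points lie in no block. -/
def blockPt {n : ℕ} (q : ℕ) : Fin (n / q) × Fin q ↪ Fin n :=
  finProdFinEquiv.toEmbedding.trans (Fin.castLEEmb (Nat.div_mul_le_self n q))

theorem blockPt_inj {n q : ℕ} {i i' : Fin (n / q)} {j j' : Fin q} :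
    blockPt q (i, j) = blockPt q (i', j') ↔ i = i' ∧ j = j' := by
  rw [(blockPt q).apply_eq_iff_eq, Prod.mk.injEq]

theorem le_div_card_of_injective {n r : ℕ} {α : Type*} [Fintype α] [Nonempty α]
    {f : Fin r × α → Fin n} (hf : Injective f) : r ≤ n / Fintype.card α :=
  (Nat.le_div_iff_mul_le Fintype.card_pos).mpr (by simpa using Fintype.card_le_of_injective f hf)

section Transpositions

variable {F : Type} [Field F] {n : ℕ} {M : Type*} [AddCommGroup M] [Module F M]
  [Module (GA F n) M] [IsScalarTower F (GA F n) M]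

def blockSwap (n : ℕ) (i : Fin (n / 2)) : Equiv.Perm (Fin n) :=
  Equiv.swap (blockPt 2 (i, 0)) (blockPt 2 (i, 1))

theorem blockSwap_pow_two (i : Fin (n / 2)) : blockSwap n i ^ 2 = 1 := by
  rw [sq, blockSwap, Equiv.swap_mul_self]

theorem commute_blockSwap (i k : Fin (n / 2)) : Commute (blockSwap n i) (blockSwap n k) := by
  rcases eq_or_ne i k with rfl | hik
  · exact Commute.refl _
  · exact (Equiv.Perm.disjoint_swap_swap (by simp [hik])).commute

variable (F n M) in
def HasSwapSystem (μ : F) (r : ℕ) : Prop :=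
  ∃ f : Fin r × Bool → Fin n, Injective f ∧
    ∃ v : M, v ≠ 0 ∧ ∀ s, permRep F M (Equiv.swap (f (s, true)) (f (s, false))) v = μ • v

theorem hasSwapSystem_iff {μ : F} {r : ℕ} :
    HasSwapSystem F n M μ r ↔ ∃ (a b : Fin r → Fin n) (v : M),
      Injective (fun x : Fin r × Bool => if x.2 then a x.1 else b x.1) ∧
      v ≠ 0 ∧ ∀ s, ga F (Equiv.swap (a s) (b s)) • v = μ • v := by
  constructor
  · rintro ⟨f, hf, v, hv, h⟩
    refine ⟨fun s => f (s, true), fun s => f (s, false), v, ?_, hv, h⟩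
    convert hf using 1
    funext ⟨s, b⟩
    cases b <;> rfl
  · rintro ⟨a, b, v, hinj, hv, h⟩
    exact ⟨_, hinj, v, hv, h⟩

theorem hasNegSystem_iff {r : ℕ} : HasNegSystem F n M r ↔ HasSwapSystem F n M (-1) r := by
  simp [hasSwapSystem_iff, HasNegSystem]

theorem hasPosSystem_iff {r : ℕ} : HasPosSystem F n M r ↔ HasSwapSystem F n M 1 r := by
  simp [hasSwapSystem_iff, HasPosSystem]

theorem HasSwapSystem.le {μ : F} {r : ℕ} (h : HasSwapSystem F n M μ r) : r ≤ n / 2 := by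
  obtain ⟨f, hf, -⟩ := h
  simpa using le_div_card_of_injective hf

theorem hasSwapSystem_zero [Nontrivial M] (μ : F) : HasSwapSystem F n M μ 0 :=
  let ⟨v, hv⟩ := exists_ne (0 : M)
  ⟨fun x => x.1.elim0, fun x => x.1.elim0, v, hv, fun s => s.elim0⟩

/-- Systems of disjoint transpositions of the same size are conjugate in `𝔖ₙ`. -/
theorem hasSwapSystem_card_iff {μ : F} (S : Finset (Fin (n / 2))) :
    HasSwapSystem F n M μ S.card ↔
      ∃ w : M, w ≠ 0 ∧ ∀ i ∈ S, permRep F M (blockSwap n i) w = μ • w := by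
  let g : Fin S.card × Bool → Fin n :=
    blockPt 2 ∘ Prod.map (fun s => S.equivFin.symm s) (fun b => if b then 0 else 1)
  have hg : Injective g := (blockPt 2).injective.comp <|
    (Subtype.val_injective.comp S.equivFin.symm.injective).prodMap (by decide)
  have hgS : ∀ s, Equiv.swap (g (s, true)) (g (s, false)) = blockSwap n (S.equivFin.symm s) :=
    fun _ => rfl
  constructor
  · rintro ⟨f, hf, v, hv, h⟩
    obtain ⟨σ, hσ⟩ := exists_perm_comp_eq hf hg
    refine ⟨permRep F M σ v, Representation.apply_ne_zero (permRep F M) σ hv, fun i hi => ?_⟩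
    have hi' : i = S.equivFin.symm (S.equivFin ⟨i, hi⟩) := by simp
    rw [hi', ← hgS, ← hσ, comp_apply, comp_apply, Equiv.swap_apply_apply]
    exact Representation.conj_apply_eq_smul (permRep F M) (h _) σ
  · rintro ⟨w, hw, h⟩
    exact ⟨g, hg, w, hw, fun s => hgS s ▸ h _ (S.equivFin.symm s).2⟩

theorem exists_eigenvector_of_maximal_swapSystem (hF : IsPrimitiveRoot (-1 : F) 2) {μ : F}
    (hμ : μ ^ 2 = 1) {r : ℕ} (hr : HasSwapSystem F n M μ r)
    (hr' : ¬HasSwapSystem F n M μ (r + 1)) (S : Finset (Fin (n / 2))) (hS : S.card = r) :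
    ∃ w : M, w ≠ 0 ∧ ∀ i, permRep F M (blockSwap n i) w = (if i ∈ S then μ else -μ) • w := by
  subst hS
  have hT : ∀ i, permRep F M (blockSwap n i) ^ 2 = 1 := fun i => by
    rw [← map_pow, blockSwap_pow_two, map_one]
  obtain ⟨w, hw, hwS⟩ := (hasSwapSystem_card_iff S).mp hr
  obtain ⟨χ, hχS, w', hw', hχ⟩ := exists_jointEigenvector_extending
    (T := fun i => permRep F M (blockSwap n i))
    (fun i j => (commute_blockSwap i j).map (permRep F M)) hF two_pos hT S (fun _ => μ) hw hwS
  refine ⟨w', hw', fun i => ?_⟩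
  rw [hχ i]
  split_ifs with hi
  · rw [hχS i hi]
  -- `χ i = μ` would extend the system by the block `i`
  have hne : χ i ≠ μ := fun hχi => hr' <| by
    rw [← Finset.card_insert_of_notMem hi]
    refine (hasSwapSystem_card_iff _).mpr ⟨w', hw', fun k hk => ?_⟩
    rcases Finset.mem_insert.mp hk with rfl | hk
    · rw [hχ, hχi]
    · rw [hχ, hχS k hk]
  have hsq := pow_eq_one_of_apply_eq_smul (hT i) hw' (hχ i)
  have : (χ i - μ) * (χ i + μ) = 0 := by linear_combination hsq - hμ
  rw [eq_neg_iff_add_eq_zero.mpr ((mul_eq_zero.mp this).resolve_left (sub_ne_zero.mpr hne))]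

theorem choose_le_finrank_of_swapSystem [FiniteDimensional F M] [Nontrivial M]
    (hF : IsPrimitiveRoot (-1 : F) 2) {μ : F} (hμ : μ ^ 2 = 1) :
    (n / 2).choose (sSup {r | HasSwapSystem F n M μ r}) ≤ Module.finrank F M := by
  set r := sSup {r | HasSwapSystem F n M μ r}
  obtain ⟨hr, hr'⟩ := sSup_setOf_spec (hasSwapSystem_zero (n := n) (M := M) μ)
    fun _ => HasSwapSystem.le
  have hμ0 : μ ≠ -μ := fun h => hF.ne_one one_lt_two <| by
    linear_combination (-μ) * h + 2 * hμ
  calc (n / 2).choose r = Fintype.card {S : Finset (Fin (n / 2)) // S.card = r} := by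
        simp [Fintype.card_finset_len]
    _ ≤ Module.finrank F M := by
      refine card_le_finrank_of_jointEigenvectors (T := fun i => permRep F M (blockSwap n i))
        (fun i j => (commute_blockSwap i j).map (permRep F M))
        (χ := fun S i => if i ∈ S.1 then μ else -μ) (fun S S' h => Subtype.ext ?_)
        fun S => exists_eigenvector_of_maximal_swapSystem hF hμ hr hr' S.1 S.2
      ext i
      have := congrFun h i
      by_cases hi : i ∈ S.1 <;> by_cases hi' : i ∈ S'.1 <;> simp_all [eq_comm]

theorem choose_irrRank2_le_finrank [FiniteDimensional F M] [Nontrivial M]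
    (hF : IsPrimitiveRoot (-1 : F) 2) :
    (n / 2).choose (irrRank2 F n M) ≤ Module.finrank F M := by
  have h₁ : rank2 F n M = sSup {r | HasSwapSystem F n M (-1) r} := by
    simp only [rank2, hasNegSystem_iff]
  have h₂ : rank2sign F n M = sSup {r | HasSwapSystem F n M 1 r} := by
    simp only [rank2sign, hasPosSystem_iff]
  rcases min_choice (rank2 F n M) (rank2sign F n M) with h | h <;> rw [irrRank2, h]
  · exact h₁ ▸ choose_le_finrank_of_swapSystem hF (by norm_num)
  · exact h₂ ▸ choose_le_finrank_of_swapSystem hF (by norm_num)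

end Transpositions

section ThreeCycles

section Cyc3

variable {n : ℕ} {a b c : Fin n}

theorem cyc3_mul_self (hab : a ≠ b) (hac : a ≠ c) (hbc : b ≠ c) :
    cyc3 a b c * cyc3 a b c = cyc3 a c b := by
  ext x
  simp only [cyc3, Equiv.Perm.mul_apply, Equiv.swap_apply_def]
  split_ifs <;> simp_all

theorem cyc3_pow_three (hab : a ≠ b) (hac : a ≠ c) (hbc : b ≠ c) : cyc3 a b c ^ 3 = 1 := by
  rw [pow_succ', sq, cyc3_mul_self hab hac hbc]
  ext x
  simp only [cyc3, Equiv.Perm.mul_apply, Equiv.swap_apply_def, Equiv.Perm.one_apply]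
  split_ifs <;> simp_all

theorem cyc3_apply_apply_apply (σ : Equiv.Perm (Fin n)) :
    cyc3 (σ a) (σ b) (σ c) = σ * cyc3 a b c * σ⁻¹ := by
  simp only [cyc3, Equiv.swap_apply_apply]
  group

end Cyc3

theorem IsPrimitiveRoot.eq_or_eq_sq_of_pow_three {F : Type*} [CommRing F] [IsDomain F] {ζ a : F}
    (hζ : IsPrimitiveRoot ζ 3) (ha : a ^ 3 = 1) (ha1 : a ≠ 1) : a = ζ ∨ a = ζ ^ 2 := by
  obtain ⟨j, hj, rfl⟩ := hζ.eq_pow_of_pow_eq_one ha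
  interval_cases j <;> simp_all

theorem apply_eq_sq_smul_iff {F M : Type*} [Field F] [AddCommGroup M] [Module F M]
    {T : Module.End F M} (hT : T ^ 3 = 1) {ζ : F} (hζ : ζ ^ 3 = 1) {w : M} :
    (T ^ 2) w = ζ • w ↔ T w = ζ ^ 2 • w := by
  constructor
  · intro h
    calc T w = (T ^ 2) ((T ^ 2) w) := by
          rw [← Module.End.mul_apply, ← pow_add, pow_succ' T 3, hT, mul_one]
      _ = ζ ^ 2 • w := by rw [h, map_smul, h, smul_smul, sq]
  · intro h
    rw [sq, Module.End.mul_apply, h, map_smul, h, smul_smul]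
    congr 1
    linear_combination ζ * hζ

variable {F : Type} [Field F] {n : ℕ} {M : Type*} [AddCommGroup M] [Module F M]
  [Module (GA F n) M] [IsScalarTower F (GA F n) M]

def blockCyc (n : ℕ) (i : Fin (n / 3)) : Equiv.Perm (Fin n) :=
  cyc3 (blockPt 3 (i, 0)) (blockPt 3 (i, 1)) (blockPt 3 (i, 2))

theorem blockCyc_pow_three (i : Fin (n / 3)) : blockCyc n i ^ 3 = 1 :=
  cyc3_pow_three (by simp) (by simp) (by simp)

theorem commute_blockCyc (i k : Fin (n / 3)) : Commute (blockCyc n i) (blockCyc n k) := by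
  rcases eq_or_ne i k with rfl | hik
  · exact Commute.refl _
  · refine Equiv.Perm.Disjoint.commute ?_
    refine .mul_left (.mul_right ?_ ?_) (.mul_right ?_ ?_) <;>
      exact Equiv.Perm.disjoint_swap_swap (by simp [hik])

variable (F n M) in
def HasCycSystem (ζ : F) (r : ℕ) : Prop :=
  ∃ f : Fin r × Fin 3 → Fin n, Injective f ∧
    ∃ v : M, v ≠ 0 ∧ ∀ s, permRep F M (cyc3 (f (s, 0)) (f (s, 1)) (f (s, 2))) v = ζ • v

theorem hasZetaSystem_iff {ζ : F} {r : ℕ} : HasZetaSystem F n M ζ r ↔ HasCycSystem F n M ζ r := by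
  constructor
  · rintro ⟨a, b, c, v, hinj, hv, h⟩
    exact ⟨_, hinj, v, hv, fun s => (h s).trans (algebraMap_smul (GA F n) ζ v)⟩
  · rintro ⟨f, hf, v, hv, h⟩
    refine ⟨fun s => f (s, 0), fun s => f (s, 1), fun s => f (s, 2), v, ?_, hv,
      fun s => (h s).trans (algebraMap_smul (GA F n) ζ v).symm⟩
    convert hf using 1
    funext ⟨s, j⟩
    fin_cases j <;> rfl

theorem HasCycSystem.le {ζ : F} {r : ℕ} (h : HasCycSystem F n M ζ r) : r ≤ n / 3 := by
  obtain ⟨f, hf, -⟩ := h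
  simpa using le_div_card_of_injective hf

theorem hasCycSystem_zero [Nontrivial M] (ζ : F) : HasCycSystem F n M ζ 0 :=
  let ⟨v, hv⟩ := exists_ne (0 : M)
  ⟨fun x => x.1.elim0, fun x => x.1.elim0, v, hv, fun s => s.elim0⟩

/-- Systems of disjoint 3-cycles of the same size are conjugate in `𝔖ₙ`; to get the eigenvalue
`ζ ^ 2` on a block, the 3-cycle of the system is sent to the inverse of the block's 3-cycle. -/
theorem hasCycSystem_card_iff {ζ : F} (hζ : IsPrimitiveRoot ζ 3) (S : Finset (Fin (n / 3)))
    {e : Fin (n / 3) → F} (he : ∀ i ∈ S, e i ^ 3 = 1 ∧ e i ≠ 1) :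
    HasCycSystem F n M ζ S.card ↔
      ∃ w : M, w ≠ 0 ∧ ∀ i ∈ S, permRep F M (blockCyc n i) w = e i • w := by
  let ι : Fin S.card → Fin (n / 3) := fun s => S.equivFin.symm s
  let o : Fin (n / 3) → Equiv.Perm (Fin 3) := fun i => if e i = ζ then 1 else Equiv.swap 1 2
  let g : Fin S.card × Fin 3 → Fin n := fun x => blockPt 3 (ι x.1, o (ι x.1) x.2)
  have hg : Injective g := by
    rintro ⟨s, j⟩ ⟨s', j'⟩ h
    obtain ⟨h₁, h₂⟩ := blockPt_inj.mp h
    obtain rfl := S.equivFin.symm.injective (Subtype.ext h₁)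
    exact Prod.ext rfl ((o _).injective h₂)
  have hgS : ∀ s w, permRep F M (cyc3 (g (s, 0)) (g (s, 1)) (g (s, 2))) w = ζ • w ↔
      permRep F M (blockCyc n (ι s)) w = e (ι s) • w := by
    intro s w
    by_cases hs : e (ι s) = ζ
    · simp [g, o, hs, blockCyc]
    · have hs2 : e (ι s) = ζ ^ 2 :=
        (IsPrimitiveRoot.eq_or_eq_sq_of_pow_three hζ (he _ (S.equivFin.symm s).2).1
          (he _ (S.equivFin.symm s).2).2).resolve_left hs
      have hcyc : cyc3 (g (s, 0)) (g (s, 1)) (g (s, 2)) = blockCyc n (ι s) ^ 2 := by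
        simp only [g, o, hs, if_false, sq, blockCyc]
        rw [cyc3_mul_self (by simp) (by simp) (by simp)]
        rfl
      rw [hcyc, map_pow, hs2]
      exact apply_eq_sq_smul_iff (by rw [← map_pow, blockCyc_pow_three, map_one]) hζ.pow_eq_one
  constructor
  · rintro ⟨f, hf, v, hv, h⟩
    obtain ⟨σ, hσ⟩ := exists_perm_comp_eq hf hg
    refine ⟨permRep F M σ v, Representation.apply_ne_zero (permRep F M) σ hv, fun i hi => ?_⟩
    have hi' : i = ι (S.equivFin ⟨i, hi⟩) := by simp [ι]
    rw [hi', ← hgS, ← hσ, comp_apply, comp_apply, comp_apply, cyc3_apply_apply_apply]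
    exact Representation.conj_apply_eq_smul (permRep F M) (h _) σ
  · rintro ⟨w, hw, h⟩
    exact ⟨g, hg, w, hw, fun s => (hgS s w).mpr (h _ (S.equivFin.symm s).2)⟩

theorem exists_eigenvector_of_maximal_cycSystem {ζ : F} (hζ : IsPrimitiveRoot ζ 3) {r : ℕ}
    (hr : HasCycSystem F n M ζ r) (hr' : ¬HasCycSystem F n M ζ (r + 1))
    {e : Fin (n / 3) → F} (he : ∀ i, e i ^ 3 = 1)
    (hcard : (Finset.univ.filter fun i => e i ≠ 1).card = r) :
    ∃ w : M, w ≠ 0 ∧ ∀ i, permRep F M (blockCyc n i) w = e i • w := by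
  set S := Finset.univ.filter fun i => e i ≠ 1
  subst hcard
  have hT : ∀ i, permRep F M (blockCyc n i) ^ 3 = 1 := fun i => by
    rw [← map_pow, blockCyc_pow_three, map_one]
  have heS : ∀ i ∈ S, e i ^ 3 = 1 ∧ e i ≠ 1 := fun i hi => ⟨he i, (Finset.mem_filter.mp hi).2⟩
  obtain ⟨w, hw, hwS⟩ := (hasCycSystem_card_iff hζ S heS).mp hr
  obtain ⟨χ, hχS, w', hw', hχ⟩ := exists_jointEigenvector_extending
    (T := fun i => permRep F M (blockCyc n i)) (fun i j => (commute_blockCyc i j).map _)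
    hζ three_pos hT S e hw hwS
  refine ⟨w', hw', fun i => ?_⟩
  rw [hχ i]
  by_cases hi : i ∈ S
  · rw [hχS i hi]
  rw [show e i = 1 by simpa [S] using hi]
  congr 1
  -- `χ i ≠ 1` would extend the system by the block `i`
  by_contra hne
  refine hr' ?_
  rw [← Finset.card_insert_of_notMem hi]
  refine (hasCycSystem_card_iff hζ _ fun k hk => ?_).mpr ⟨w', hw', fun k _ => hχ k⟩
  rcases Finset.mem_insert.mp hk with rfl | hk
  · exact ⟨pow_eq_one_of_apply_eq_smul (hT k) hw' (hχ k), hne⟩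
  · exact hχS k hk ▸ heS k hk

theorem two_pow_mul_choose_le_finrank_of_cycSystem [FiniteDimensional F M] [Nontrivial M]
    {ζ : F} (hζ : IsPrimitiveRoot ζ 3) :
    2 ^ sSup {r | HasCycSystem F n M ζ r} * (n / 3).choose (sSup {r | HasCycSystem F n M ζ r}) ≤
      Module.finrank F M := by
  set r := sSup {r | HasCycSystem F n M ζ r}
  obtain ⟨hr, hr'⟩ := sSup_setOf_spec (hasCycSystem_zero (n := n) (M := M) ζ)
    fun _ => HasCycSystem.le
  -- a character with `r` nontrivial values is `i ↦ ζ ^ k i`, with `k i ∈ {1, 2}` exactly on `S`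
  let κ := Σ S : {S : Finset (Fin (n / 3)) // S.card = r}, (S.1 → Bool)
  let k : κ → Fin (n / 3) → ℕ := fun x i =>
    if h : i ∈ x.1.1 then (if x.2 ⟨i, h⟩ then 1 else 2) else 0
  have hk3 : ∀ x i, k x i < 3 := fun x i => by simp only [k]; split_ifs <;> norm_num
  have hk0 : ∀ x i, k x i = 0 ↔ i ∉ x.1.1 := fun x i => by simp only [k]; split_ifs <;> simp_all
  have hk : Injective k := by
    rintro ⟨⟨S, hS⟩, u⟩ ⟨⟨S', hS'⟩, u'⟩ h
    obtain rfl : S = S' := by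
      ext i
      have h₁ := hk0 ⟨⟨S, hS⟩, u⟩ i
      rw [h] at h₁
      exact not_iff_not.mp (h₁.symm.trans (hk0 ⟨⟨S', hS'⟩, u'⟩ i))
    congr
    funext ⟨i, hi⟩
    have := congrFun h i
    simp only [k, dif_pos hi] at this
    by_cases hu : u ⟨i, hi⟩ <;> by_cases hu' : u' ⟨i, hi⟩ <;> simp_all
  calc 2 ^ r * (n / 3).choose r = Fintype.card κ := by
        simp only [κ, Fintype.card_sigma, Fintype.card_fun, Fintype.card_coe, Fintype.card_bool]
        rw [Finset.sum_congr rfl fun S _ => by rw [S.2]]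
        simp [Fintype.card_finset_len, mul_comm]
    _ ≤ Module.finrank F M := by
      refine card_le_finrank_of_jointEigenvectors (T := fun i => permRep F M (blockCyc n i))
        (fun i j => (commute_blockCyc i j).map _) (χ := fun x i => ζ ^ k x i)
        (fun x y h => hk (funext fun i => hζ.pow_inj (hk3 x i) (hk3 y i) (congrFun h i)))
        fun x => exists_eigenvector_of_maximal_cycSystem hζ hr hr' (fun i => ?_) ?_
      · rw [← pow_mul, mul_comm, pow_mul, hζ.pow_eq_one, one_pow]
      · convert x.1.2
        ext i
        have h3 : 3 ∣ k x i ↔ k x i = 0 :=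
          ⟨fun h => Nat.eq_zero_of_dvd_of_lt h (hk3 x i), fun h => h ▸ dvd_zero 3⟩
        simp [hζ.pow_eq_one_iff_dvd, h3, hk0]

theorem two_pow_mul_choose_rank3_le_finrank [FiniteDimensional F M] [Nontrivial M] {ζ : F}
    (hζ : IsPrimitiveRoot ζ 3) :
    2 ^ rank3 F n ζ M * (n / 3).choose (rank3 F n ζ M) ≤ Module.finrank F M := by
  simpa only [rank3, hasZetaSystem_iff] using two_pow_mul_choose_le_finrank_of_cycSystem hζ

end ThreeCycles

section Subquotients

variable {F : Type} [Field F] {n : ℕ} {V : Type} [AddCommGroup V] [Module F V]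
  [Module (GA F n) V] [IsScalarTower F (GA F n) V] [FiniteDimensional F V]

instance finiteDimensional_submodule (B : Submodule (GA F n) V) : FiniteDimensional F B :=
  .of_injective (B.subtype.restrictScalars F) Subtype.val_injective

theorem finrank_subquotient_le (A B : Submodule (GA F n) V) :
    Module.finrank F (B ⧸ A.comap B.subtype) ≤ Module.finrank F V :=
  (LinearMap.finrank_le_finrank_of_surjective (f := (A.comap B.subtype).mkQ.restrictScalars F)
    (Submodule.Quotient.mk_surjective _)).trans
  (LinearMap.finrank_le_finrank_of_injective (f := B.subtype.restrictScalars F)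
    Subtype.val_injective)

end Subquotients

theorem apply_sSup_le_of_forall {s : Set ℕ} {f : ℕ → ℕ} {c : ℕ} (h0 : f 0 ≤ c)
    (hs : ∀ r ∈ s, f r ≤ c) : f (sSup s) ≤ c := by
  by_cases hs' : s.Nonempty ∧ BddAbove s
  · exact hs _ (Nat.sSup_mem hs'.1 hs'.2)
  -- the junk value: `sSup s = 0` when `s` is empty or unbounded
  rcases not_and_or.mp hs' with h | h
  · rwa [Set.not_nonempty_iff_eq_empty.mp h, csSup_empty]
  · rwa [csSup_of_not_bddAbove h, csSup_empty]

/-- Theorem 3.3 / `TDimRank`: let `V` be a nonzero `F𝔖ₙ`-module and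
`r := 𝔯(V)`.  If `p ≠ 2` then `dim V ≥ C(⌊n/2⌋, r)`; if `p = 2` then
`dim V ≥ 2^r · C(⌊n/3⌋, r)` (the rank for `p = 2` computed with respect to a primitive
cube root of unity `ζ ∈ F`). -/
theorem statement4 (F : Type) [Field F] (p : ℕ) [CharP F p] (n : ℕ)
    (V : Type) [AddCommGroup V] [Module F V] [Module (GA F n) V]
    [IsScalarTower F (GA F n) V] [FiniteDimensional F V] [Nontrivial V] :
    (p ≠ 2 → (n / 2).choose (modRank2 F n V) ≤ Module.finrank F V) ∧
    (p = 2 → ∀ zeta : F, IsPrimitiveRoot zeta 3 →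
      2 ^ (modRank3 F n zeta V) * (n / 3).choose (modRank3 F n zeta V) ≤
        Module.finrank F V) := by
  constructor
  · intro hp
    have hF := IsPrimitiveRoot.neg_one (R := F) p hp
    refine apply_sSup_le_of_forall (f := fun r => (n / 2).choose r)
      (by simp only [Nat.choose_zero_right]; exact Module.finrank_pos) ?_
    rintro _ ⟨A, B, -, hD, rfl⟩
    have := IsSimpleModule.nontrivial (GA F n) (B ⧸ A.comap B.subtype)
    exact (choose_irrRank2_le_finrank hF).trans (finrank_subquotient_le A B)
  · rintro - ζ hζ
    refine apply_sSup_le_of_forall (f := fun r => 2 ^ r * (n / 3).choose r)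
      (by simp only [pow_zero, one_mul, Nat.choose_zero_right]; exact Module.finrank_pos) ?_
    rintro _ ⟨A, B, -, hD, rfl⟩
    have := IsSimpleModule.nontrivial (GA F n) (B ⧸ A.comap B.subtype)
    exact (two_pow_mul_choose_rank3_le_finrank hζ).trans (finrank_subquotient_le A B)

end KLT
end

section
/- Define f(i,j) := max(1, |i − j|) for integers i,j and F(i,k) := ∏_{j=1}^{k} f(i,j) for k ≥ 0. Then for all integers i > 0 and j, k ≥ 0, F(i, j+k) ≤ 3^{j+k} · F(i,j) · F(i,k). -/
/-!
For `i = a + 1 > 0` the factors `f(i, s)`, `s = 1, 2, …`, run through `a, a - 1, …, 1, 1, 1, 2, 3, …`,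
so `F(i, k)` is the falling factorial `a (a - 1) ⋯ (a - k + 1)` for `k ≤ a` and `a! (k - a - 1)!`
for `k > a`. The inequality thus becomes one between products of factorials, which (for `j ≤ k`)
is checked separately according to the position of `a` relative to `j`, `k` and `j + k`; the factor
`3 ^ (j + k)` absorbs binomial coefficients, bounded by `2 ^ n`, and the trinomial coefficient
`(x + y + z)! / (x! y! z!) ≤ 3 ^ (x + y + z)`.
-/

namespace KLT

open scoped Classical TensorProduct

/-- `f(i,j) = max(1, |i-j|)`. -/
def ff (i j : ℤ) : ℤ := max 1 |i - j|

/-- `F(i,k) = ∏_{j=1}^{k} f(i,j)` (the empty product `F(i,0)` is `1`). -/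
noncomputable def FF (i : ℤ) (k : ℕ) : ℤ := ∏ j ∈ Finset.Icc (1 : ℤ) (k : ℤ), ff i j

end KLT

namespace Nat

open Finset in
theorem choose_mul_two_pow_le_three_pow (n m : ℕ) : n.choose m * 2 ^ (n - m) ≤ 3 ^ n := by
  rcases lt_or_ge n m with hnm | hmn
  · simp [choose_eq_zero_of_lt hnm]
  calc n.choose m * 2 ^ (n - m) = 1 ^ m * 2 ^ (n - m) * n.choose m := by ring
    _ ≤ ∑ l ∈ range (n + 1), 1 ^ l * 2 ^ (n - l) * n.choose l :=
      single_le_sum (f := fun l => 1 ^ l * 2 ^ (n - l) * n.choose l) (fun _ _ => Nat.zero_le _)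
        (mem_range.2 (lt_succ_of_le hmn))
    _ = 3 ^ n := by simpa using (add_pow (1 : ℕ) 2 n).symm

theorem factorial_add_add_le (a b c : ℕ) :
    (a + b + c)! ≤ 3 ^ (a + b + c) * (a ! * b ! * c !) := by
  have hab : (a + b)! ≤ 2 ^ (a + b) * (a ! * b !) := by
    rw [← add_choose_mul_factorial_mul_factorial a b, mul_assoc]
    exact Nat.mul_le_mul_right _ (choose_le_two_pow _ _)
  calc (a + b + c)! = (a + b + c).choose c * (a + b)! * c ! :=
        (add_choose_mul_factorial_mul_factorial _ _).symm
    _ ≤ (a + b + c).choose c * (2 ^ (a + b) * (a ! * b !)) * c ! := by gcongr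
    _ = (a + b + c).choose c * 2 ^ (a + b + c - c) * (a ! * b ! * c !) := by
        rw [Nat.add_sub_cancel]; ring
    _ ≤ 3 ^ (a + b + c) * (a ! * b ! * c !) :=
        Nat.mul_le_mul_right _ (choose_mul_two_pow_le_three_pow _ _)

theorem descFactorial_add_le_mul (n j k : ℕ) :
    n.descFactorial (j + k) ≤ n.descFactorial j * n.descFactorial k := by
  rw [← descFactorial_mul_descFactorial (le_add_right j k), Nat.add_sub_cancel_left, mul_comm]
  exact Nat.mul_le_mul_left _ (descFactorial_le k (sub_le n j))

theorem factorial_mul_factorial_le_descFactorial_mul {n j k r : ℕ} (hj : j ≤ n) (hk : k ≤ n)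
    (hr : j + k = n + 1 + r) : n ! * r ! ≤ n.descFactorial j * n.descFactorial k := by
  have hsub (a b : ℕ) : a ! * b ! ≤ (a + b)! :=
    le_of_dvd (factorial_pos _) (factorial_mul_factorial_dvd_factorial_add a b)
  have hparts : r ! * (n - j)! * (n - k)! ≤ n ! := calc
    r ! * (n - j)! * (n - k)! ≤ (r + (n - j) + (n - k))! :=
      (Nat.mul_le_mul_right _ (hsub _ _)).trans (hsub _ _)
    _ ≤ n ! := factorial_le (by omega)
  refine Nat.le_of_mul_le_mul_right ?_ (mul_pos (factorial_pos (n - j)) (factorial_pos (n - k)))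
  calc n ! * r ! * ((n - j)! * (n - k)!) = n ! * (r ! * (n - j)! * (n - k)!) := by ring
    _ ≤ n ! * n ! := Nat.mul_le_mul_left _ hparts
    _ = (n - j)! * n.descFactorial j * ((n - k)! * n.descFactorial k) := by
        rw [factorial_mul_descFactorial hj, factorial_mul_descFactorial hk]
    _ = n.descFactorial j * n.descFactorial k * ((n - j)! * (n - k)!) := by ring

theorem factorial_add_le_two_pow_mul_descFactorial {n j : ℕ} (hj : j ≤ n) (q : ℕ) :
    (j + q)! ≤ 2 ^ (j + q) * (n.descFactorial j * q !) := by
  rw [← add_choose_mul_factorial_mul_factorial j q, mul_assoc]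
  gcongr
  · exact choose_le_two_pow _ _
  · exact descFactorial_self j ▸ descFactorial_le j hj

end Nat

namespace KLT

open Nat

theorem FF_succ (i : ℤ) (k : ℕ) : FF i (k + 1) = FF i k * ff i (k + 1) := by
  rw [FF, FF, Nat.cast_succ, ← Finset.insert_Icc_right_eq_Icc_add_one (by omega),
    Finset.prod_insert (by simp), mul_comm]

theorem FF_natCast_add_one_of_le {a k : ℕ} (hk : k ≤ a) : FF (a + 1) k = a.descFactorial k := by
  induction k with
  | zero => simp [FF]
  | succ k ih =>
    have hff : ff (a + 1) (k + 1) = (a - k : ℕ) := by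
      rw [ff, abs_of_nonneg (by omega), max_eq_right (by omega)]; omega
    rw [FF_succ, ih (by omega), hff, descFactorial_succ]
    push_cast; ring

theorem FF_natCast_add_one_add (a p : ℕ) : FF (a + 1) (a + 1 + p) = (a ! * p ! : ℕ) := by
  induction p with
  | zero =>
    rw [add_zero, FF_succ, FF_natCast_add_one_of_le le_rfl, descFactorial_self]
    simp [ff]
  | succ p ih =>
    have hff : ff (a + 1) ((a + 1 + p : ℕ) + 1) = (p + 1 : ℕ) := by
      rw [ff, abs_of_nonpos (by omega), max_eq_right (by omega)]; omega
    rw [← add_assoc, FF_succ, ih, hff, factorial_succ]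
    push_cast; ring

theorem FF_natCast_add_one_add_le (a : ℕ) {j k : ℕ} (hjk : j ≤ k) :
    FF (a + 1) (j + k) ≤ 3 ^ (j + k) * FF (a + 1) j * FF (a + 1) k := by
  have absorb {x y z : ℕ} (h : x ≤ y * z) : (x : ℤ) ≤ 3 ^ (j + k) * y * z := by
    rw [mul_assoc]; exact_mod_cast h.trans (Nat.le_mul_of_pos_left _ (by positivity))
  rcases le_or_gt (j + k) a with hjka | hajk
  · rw [FF_natCast_add_one_of_le hjka, FF_natCast_add_one_of_le (by omega),
      FF_natCast_add_one_of_le (by omega)]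
    exact absorb (descFactorial_add_le_mul a j k)
  rcases le_or_gt k a with hka | hak
  · obtain ⟨r, hr⟩ : ∃ r, j + k = a + 1 + r := ⟨j + k - (a + 1), by omega⟩
    have hFF : FF (a + 1) (j + k) = (a ! * r ! : ℕ) := by rw [hr, FF_natCast_add_one_add]
    rw [hFF, FF_natCast_add_one_of_le (by omega), FF_natCast_add_one_of_le hka]
    exact absorb (factorial_mul_factorial_le_descFactorial_mul (by omega) hka hr)
  obtain ⟨q, rfl⟩ : ∃ q, k = a + 1 + q := ⟨k - (a + 1), by omega⟩
  rcases le_or_gt j a with hja | haj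
  · rw [show j + (a + 1 + q) = a + 1 + (j + q) by ring, FF_natCast_add_one_add,
      FF_natCast_add_one_of_le hja, FF_natCast_add_one_add]
    have h23 : 2 ^ (j + q) ≤ 3 ^ (a + 1 + (j + q)) :=
      (Nat.pow_le_pow_left (by norm_num) _).trans (Nat.pow_le_pow_right (by norm_num) (by omega))
    exact_mod_cast calc a ! * (j + q)!
        ≤ a ! * (2 ^ (j + q) * (a.descFactorial j * q !)) :=
          Nat.mul_le_mul_left _ (factorial_add_le_two_pow_mul_descFactorial hja q)
      _ ≤ a ! * (3 ^ (a + 1 + (j + q)) * (a.descFactorial j * q !)) := by gcongr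
      _ = 3 ^ (a + 1 + (j + q)) * a.descFactorial j * (a ! * q !) := by ring
  obtain ⟨p, rfl⟩ : ∃ p, j = a + 1 + p := ⟨j - (a + 1), by omega⟩
  rw [show a + 1 + p + (a + 1 + q) = a + 1 + (p + q + (a + 1)) by ring, FF_natCast_add_one_add,
    FF_natCast_add_one_add, FF_natCast_add_one_add]
  have h3 : (a + 1)! ≤ 3 ^ (a + 1) * a ! := by
    rw [factorial_succ]; exact Nat.mul_le_mul_right _ (Nat.lt_pow_self (by norm_num)).le
  exact_mod_cast calc a ! * (p + q + (a + 1))!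
      ≤ a ! * (3 ^ (p + q + (a + 1)) * (p ! * q ! * (a + 1)!)) :=
        Nat.mul_le_mul_left _ (factorial_add_add_le p q (a + 1))
    _ ≤ a ! * (3 ^ (p + q + (a + 1)) * (p ! * q ! * (3 ^ (a + 1) * a !))) := by gcongr
    _ = 3 ^ (a + 1 + (p + q + (a + 1))) * (a ! * p !) * (a ! * q !) := by ring

/-- for all integers `i > 0` and `j, k ≥ 0`,
`F(i, j+k) ≤ 3^{j+k} · F(i,j) · F(i,k)`. -/
theorem statement10 (i : ℤ) (hi : 0 < i) (j k : ℕ) :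
    FF i (j + k) ≤ 3 ^ (j + k) * FF i j * FF i k := by
  obtain ⟨a, rfl⟩ : ∃ a : ℕ, i = a + 1 := ⟨(i - 1).toNat, by omega⟩
  rcases le_total j k with hjk | hkj
  · exact FF_natCast_add_one_add_le a hjk
  · simpa only [add_comm k j, mul_right_comm _ (FF _ k)] using FF_natCast_add_one_add_le a hkj

end KLT
end

section
/- Let λ be a partition of l, μ a partition of m, and ν := λ + μ the partition of l + m with ν_i = λ_i + μ_i for all i. Then G(ν) ≤ 3^{l+m} · G(λ) · G(μ), where G(κ) := ∏_{(i,j)∈κ} max(1, |i − j|), the product over all boxes (i,j) of the Young diagram of κ. -/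
/-!
Formalization of statements from "Level, rank, and tensor growth of representations of
symmetric groups" by Kleshchev, Larsen, Tiep.
-/

namespace KLT

open scoped Classical TensorProduct

/-- `G(κ) = ∏_{(i,j) ∈ κ} max(1, |i - j|)`, the product over all boxes of the Young
diagram of `κ` (here boxes are indexed `0`-based; `|i - j|` is unchanged by the shift). -/
def GFun {n : ℕ} (kappa : n.Partition) : ℕ :=
  ∏ i ∈ Finset.range (Multiset.card kappa.parts),
    ∏ j ∈ Finset.range (rowLen kappa i), max 1 ((i : ℤ) - (j : ℤ)).natAbs

/-! The factors of row `i` (`0`-indexed) of length `r` are `i, i - 1, …, 1`, then `1, 1, 2, …`,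
so its product is `i! / (i - r)!` if `r ≤ i` and `i! (r - i - 1)!` otherwise. From these closed
forms, a row of length `a + b` costs at most `3 ^ (a + b)` times the rows of lengths `a` and `b`,
the worst case being the trinomial bound `(x + y + z)! ≤ 3 ^ (x + y + z) x! y! z!`. Multiplying
over the rows of `ν = λ + μ` gives the factor `3 ^ (l + m)`. -/

open Finset Nat

theorem _root_.Nat.factorial_add_add_le_s11 (x y z : ℕ) :
    (x + y + z)! ≤ 3 ^ (x + y + z) * (x ! * y ! * z !) := by
  -- one term of the binomial expansion of `(2 + 1) ^ (x + y + z)`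
  have hchoose : (x + y + z).choose z * 2 ^ (x + y) ≤ 3 ^ (x + y + z) := by
    rw [show (3 : ℕ) = 2 + 1 from rfl, add_pow, ← choose_symm_add, mul_comm]
    simp only [one_pow, mul_one]
    exact single_le_sum (f := fun k => 2 ^ k * (x + y + z).choose k) (fun _ _ => Nat.zero_le _)
      (mem_range.mpr (by omega))
  calc (x + y + z)! = (x + y + z).choose z * ((x + y).choose y * x ! * y !) * z ! := by
        rw [add_choose_mul_factorial_mul_factorial, add_choose_mul_factorial_mul_factorial]
    _ ≤ (x + y + z).choose z * (2 ^ (x + y) * x ! * y !) * z ! := by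
        gcongr; exact choose_le_two_pow _ _
    _ = (x + y + z).choose z * 2 ^ (x + y) * (x ! * y ! * z !) := by ring
    _ ≤ 3 ^ (x + y + z) * (x ! * y ! * z !) := by gcongr

theorem _root_.Nat.descFactorial_add_le (n a b : ℕ) :
    n.descFactorial (a + b) ≤ n.descFactorial a * n.descFactorial b := by
  rw [← descFactorial_mul_descFactorial (Nat.le_add_right a b), Nat.add_sub_cancel_left,
    mul_comm]
  gcongr
  exact Nat.sub_le n a

theorem _root_.Nat.factorial_mul_factorial_le_factorial_add (x y : ℕ) : x ! * y ! ≤ (x + y)! :=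
  Nat.le_of_dvd (factorial_pos _) (factorial_mul_factorial_dvd_factorial_add x y)

theorem _root_.Nat.factorial_mul_factorial_le_descFactorial_mul_descFactorial {n a b : ℕ}
    (ha : a ≤ n) (hb : b ≤ n) (hab : n < a + b) :
    n ! * (a + b - n - 1)! ≤ n.descFactorial a * n.descFactorial b := by
  refine Nat.le_of_mul_le_mul_right ?_ (mul_pos (factorial_pos (n - a)) (factorial_pos (n - b)))
  calc n ! * (a + b - n - 1)! * ((n - a)! * (n - b)!)
      = n ! * ((a + b - n - 1)! * (n - a)! * (n - b)!) := by ring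
    _ ≤ n ! * (a + b - n - 1 + (n - a) + (n - b))! := by
        gcongr
        exact (Nat.mul_le_mul_right _ (factorial_mul_factorial_le_factorial_add _ _)).trans
          (factorial_mul_factorial_le_factorial_add _ _)
    _ ≤ n ! * n ! := by gcongr; omega
    _ = (n - a)! * n.descFactorial a * ((n - b)! * n.descFactorial b) := by
        rw [factorial_mul_descFactorial ha, factorial_mul_descFactorial hb]
    _ = n.descFactorial a * n.descFactorial b * ((n - a)! * (n - b)!) := by ring

theorem _root_.List.sum_range_getD_of_length_le {M : Type*} [AddCommMonoid M] :
    ∀ (L : List M) {N : ℕ}, L.length ≤ N → ∑ i ∈ range N, L.getD i 0 = L.sum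
  | [], N, _ => by simp
  | a :: t, N + 1, h => by
    rw [sum_range_succ', List.sum_cons, add_comm]
    simp only [List.getD_cons_succ, List.getD_cons_zero]
    rw [List.sum_range_getD_of_length_le t (by simpa using h)]

def rowProd (i r : ℕ) : ℕ := ∏ j ∈ range r, max 1 ((i : ℤ) - j).natAbs

theorem rowProd_of_le {i r : ℕ} (h : r ≤ i) : rowProd i r = i.descFactorial r := by
  rw [rowProd, descFactorial_eq_prod_range]
  refine prod_congr rfl fun j hj => ?_
  have := mem_range.mp hj
  omega

theorem rowProd_of_lt {i r : ℕ} (h : i < r) : rowProd i r = i ! * (r - i - 1)! := by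
  obtain ⟨k, rfl⟩ := Nat.exists_eq_add_of_lt h
  have hleft : ∏ j ∈ range i, max 1 ((i : ℤ) - j).natAbs = i ! := by
    rw [← descFactorial_self]; exact rowProd_of_le le_rfl
  rw [rowProd, show i + k + 1 = i + 1 + k by omega, prod_range_add, prod_range_succ, hleft,
    show i + 1 + k - i - 1 = k by omega, ← prod_range_add_one_eq_factorial k]
  simp only [sub_self, Int.natAbs_zero, zero_le_one, max_eq_left, mul_one]
  congr 1
  exact prod_congr rfl fun t _ => by omega

theorem rowProd_add_le (i a b : ℕ) :
    rowProd i (a + b) ≤ 3 ^ (a + b) * (rowProd i a * rowProd i b) := by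
  wlog hab : a ≤ b generalizing a b
  · rw [add_comm, mul_comm (rowProd i a)]
    exact this b a (by omega)
  rcases le_or_gt b i with hb | hb
  · rw [rowProd_of_le (hab.trans hb), rowProd_of_le hb]
    rcases le_or_gt (a + b) i with hsum | hsum
    · rw [rowProd_of_le hsum]
      exact (descFactorial_add_le i a b).trans (Nat.le_mul_of_pos_left _ (by positivity))
    · rw [rowProd_of_lt hsum]
      exact (factorial_mul_factorial_le_descFactorial_mul_descFactorial (hab.trans hb) hb
        hsum).trans (Nat.le_mul_of_pos_left _ (by positivity))
  rw [rowProd_of_lt hb, rowProd_of_lt (by omega : i < a + b)]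
  rcases le_or_gt a i with ha | ha
  · rw [rowProd_of_le ha]
    have h := factorial_add_add_le_s11 a (b - i - 1) 0
    rw [add_zero, factorial_zero, mul_one, show a + (b - i - 1) = a + b - i - 1 by omega] at h
    calc i ! * (a + b - i - 1)!
        ≤ i ! * (3 ^ (a + b - i - 1) * (a ! * (b - i - 1)!)) := by gcongr
      _ ≤ i ! * (3 ^ (a + b) * (i.descFactorial a * (b - i - 1)!)) := by
        gcongr
        · norm_num
        · omega
        · rw [← descFactorial_self]; exact descFactorial_le a ha
      _ = 3 ^ (a + b) * (i.descFactorial a * (i ! * (b - i - 1)!)) := by ring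
  · rw [rowProd_of_lt ha]
    have h := factorial_add_add_le_s11 (a - i - 1) (b - i - 1) (i + 1)
    rw [show a - i - 1 + (b - i - 1) + (i + 1) = a + b - i - 1 by omega] at h
    calc i ! * (a + b - i - 1)!
        ≤ i ! * (3 ^ (a + b - i - 1) * ((a - i - 1)! * (b - i - 1)! * (i + 1)!)) := by gcongr
      _ = 3 ^ (a + b - i - 1) * (i + 1) * (i ! * (a - i - 1)! * (i ! * (b - i - 1)!)) := by
        rw [factorial_succ]; ring
      _ ≤ 3 ^ (a + b - i - 1) * 3 ^ (i + 1) * (i ! * (a - i - 1)! * (i ! * (b - i - 1)!)) := by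
        gcongr; exact (Nat.lt_pow_self (by norm_num)).le
      _ = 3 ^ (a + b) * (i ! * (a - i - 1)! * (i ! * (b - i - 1)!)) := by
        rw [← pow_add, show a + b - i - 1 + (i + 1) = a + b by omega]

variable {n : ℕ}

theorem _root_.Nat.Partition.card_parts_le (κ : n.Partition) : Multiset.card κ.parts ≤ n := by
  simpa [κ.parts_sum] using
    Multiset.card_nsmul_le_sum (s := κ.parts) (a := 1) fun _ hx => κ.parts_pos hx

theorem sum_range_rowLen (κ : n.Partition) {N : ℕ} (h : Multiset.card κ.parts ≤ N) :
    ∑ i ∈ range N, rowLen κ i = n := by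
  calc ∑ i ∈ range N, rowLen κ i = ((κ.parts.sort (· ≤ ·)).reverse).sum :=
        List.sum_range_getD_of_length_le _ (by simpa using h)
    _ = n := by rw [List.sum_reverse, ← Multiset.sum_coe, Multiset.sort_eq, κ.parts_sum]

theorem rowLen_eq_zero {κ : n.Partition} {i : ℕ} (h : Multiset.card κ.parts ≤ i) :
    rowLen κ i = 0 :=
  List.getD_eq_default _ _ (by simpa using h)

theorem GFun_eq_prod_range (κ : n.Partition) {N : ℕ} (h : Multiset.card κ.parts ≤ N) :
    GFun κ = ∏ i ∈ range N, rowProd i (rowLen κ i) := by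
  refine prod_subset (range_subset_range.mpr h) fun i _ hi => ?_
  rw [rowLen_eq_zero (not_lt.mp (mem_range.not.mp hi)), prod_range_zero]

/-- if `λ ⊢ l`, `μ ⊢ m` and `ν = λ + μ` is the componentwise sum
(a partition of `l + m`), then `G(ν) ≤ 3^{l+m} · G(λ) · G(μ)`. -/
theorem statement11 {l m : ℕ} (lam : l.Partition) (mu : m.Partition)
    (nu : (l + m).Partition) (hsum : ∀ i : ℕ, rowLen nu i = rowLen lam i + rowLen mu i) :
    GFun nu ≤ 3 ^ (l + m) * GFun lam * GFun mu := by
  have hlam : Multiset.card lam.parts ≤ l + m := lam.card_parts_le.trans (Nat.le_add_right l m)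
  have hmu : Multiset.card mu.parts ≤ l + m := mu.card_parts_le.trans (Nat.le_add_left m l)
  calc GFun nu = ∏ i ∈ range (l + m), rowProd i (rowLen lam i + rowLen mu i) := by
        simp_rw [← hsum]
        exact GFun_eq_prod_range nu nu.card_parts_le
    _ ≤ ∏ i ∈ range (l + m), 3 ^ (rowLen lam i + rowLen mu i) *
          (rowProd i (rowLen lam i) * rowProd i (rowLen mu i)) :=
        prod_le_prod' fun i _ => rowProd_add_le i _ _
    _ = 3 ^ (l + m) * GFun lam * GFun mu := by
        rw [prod_mul_distrib, prod_mul_distrib, prod_pow_eq_pow_sum, sum_add_distrib,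
          sum_range_rowLen lam hlam, sum_range_rowLen mu hmu, ← GFun_eq_prod_range lam hlam,
          ← GFun_eq_prod_range mu hmu, mul_assoc]

end KLT
end
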